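/- arXiv:0909.0969 — 4 statements merged into one kernel-verified Lean document; each statement's English description precedes it below -/
import Mathlib

section
/- Let k be a perfect field of characteristic p, let S̄ = k[[T₁,…,T_d]] with maximal ideal r̄ = (T₁,…,T_d), and let σ: S̄ → S̄ be the Frobenius-semilinear ring endomorphism with σ(Tᵢ) = Tᵢᵖ. Let h̄ ∈ r̄ have order e ≤ p−2 (i.e. h̄ ∈ r̄^e \ r̄^{e+1}). Let C be an S̄-module annihilated by some f ∈ S̄ \ {0}, and let φ: C → S̄ ⊗_{σ,S̄} C be an S̄-linear map whose cokernel is annihilated by h̄. Then C = 0. -/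
/-!
Let `g` be an element of minimal order `m` in the annihilator of `C`. If `m = 0`, `g` is a unit
and `C = 0`. Otherwise `G = g * hbar` kills `D`, because `hbar • D ⊆ φ(C)`. Write
`G = ∑ₐ Tᵃ σ(Gₐ)` over the exponents `a` with `aᵢ < p`. Each `G ↦ Gₐ` satisfies
`(σ(s) * r)ₐ = s * rₐ`, so `x ⊗ c ↦ xₐ • c` gives a `σ`-semilinear map out of `C`. The universal
property of `D` then shows that every `Gₐ` kills `C`. Hence `ord Gₐ ≥ m` for all `a`, so
`ord G ≥ p * m`. But `ord G = m + ord hbar ≤ m + e < p * m`, because `e ≤ p - 2` and `m ≥ 1`.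
-/

/-- `D`, together with the `σ`-semilinear map `ι : C → D`, is the base change
`S ⊗_{σ,S} C` of `C` along the ring endomorphism `σ : S → S`:  it satisfies the
universal property that every `σ`-semilinear map out of `C` factors uniquely
through an `S`-linear map out of `D`. -/
def IsSigmaBaseChange {S : Type} [CommRing S] (σ : S →+* S)
    {C : Type} [AddCommGroup C] [Module S C]
    {D : Type} [AddCommGroup D] [Module S D] (ι : C →ₛₗ[σ] D) : Prop :=
  ∀ (E : Type) [AddCommGroup E] [Module S E] (j : C →ₛₗ[σ] E),
    ∃! g : D →ₗ[S] E, ∀ c : C, g (ι c) = j c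

open TensorProduct

theorem IsSigmaBaseChange.map_mem_annihilator {S : Type} [CommRing S] {σ : S →+* S}
    {C : Type} [AddCommGroup C] [Module S C] {D : Type} [AddCommGroup D] [Module S D]
    {ι : C →ₛₗ[σ] D} (hD : IsSigmaBaseChange σ ι) (τ : S →+ S)
    (hτ : ∀ s r, τ (σ s * r) = s * τ r) {G : S} (hG : G ∈ Module.annihilator S D) :
    τ G ∈ Module.annihilator S C := by
  let π : S ⊗[ℤ] C →ₗ[ℤ] C := TensorProduct.lift
    (LinearMap.mk₂ ℤ (fun s c => τ s • c) (fun _ _ _ => by rw [map_add, add_smul])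
      (fun n s c => by rw [map_zsmul, smul_assoc]) (fun _ _ _ => smul_add _ _ _)
      (fun n s c => smul_comm _ _ _))
  have hπ : ∀ s c, π (s ⊗ₜ c) = τ s • c := fun _ _ => rfl
  -- `W` is the largest `S`-submodule inside `ker π`; modulo `W`, `c ↦ 1 ⊗ c` is `σ`-semilinear.
  let W : Submodule S (S ⊗[ℤ] C) :=
    { carrier := {x | ∀ r : S, π (r • x) = 0}
      add_mem' := fun hx hy r => by rw [smul_add, map_add, hx, hy, add_zero]
      zero_mem' := fun r => by rw [smul_zero, map_zero]
      smul_mem' := fun s x hx r => by rw [smul_smul]; exact hx _ }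
  have hmk : ∀ s c, s • W.mkQ (1 ⊗ₜ c) = W.mkQ (s ⊗ₜ c) := fun s c => by
    rw [← map_smul, smul_tmul', smul_eq_mul, mul_one]
  let j : C →ₛₗ[σ] S ⊗[ℤ] C ⧸ W :=
    { toFun := fun c => W.mkQ (1 ⊗ₜ c)
      map_add' := fun c c' => by rw [tmul_add, map_add]
      map_smul' := fun s c => by
        rw [hmk, Submodule.mkQ_apply, Submodule.mkQ_apply, Submodule.Quotient.eq]
        intro r
        rw [smul_sub, smul_tmul', smul_tmul', map_sub, hπ, hπ, smul_eq_mul, smul_eq_mul,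
          mul_one, mul_comm r, hτ, mul_smul, smul_comm, sub_self] }
  obtain ⟨g, hg, -⟩ := hD _ j
  rw [Module.mem_annihilator] at hG ⊢
  intro c
  have hGc : W.mkQ (G ⊗ₜ c) = 0 := by
    rw [← hmk]
    change G • j c = 0
    rw [← hg, ← map_smul, hG, map_zero]
  have := (Submodule.Quotient.mk_eq_zero W).1 hGc 1
  rwa [one_smul, hπ] at this

namespace Finsupp

variable {ι : Type*}

noncomputable def modNat (u : ι →₀ ℕ) (p : ℕ) : ι →₀ ℕ := u.mapRange (· % p) (Nat.zero_mod p)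

noncomputable def divNat (u : ι →₀ ℕ) (p : ℕ) : ι →₀ ℕ := u.mapRange (· / p) (Nat.zero_div p)

@[simp] theorem modNat_apply (u : ι →₀ ℕ) (p : ℕ) (i : ι) : u.modNat p i = u i % p := rfl

@[simp] theorem divNat_apply (u : ι →₀ ℕ) (p : ℕ) (i : ι) : u.divNat p i = u i / p := rfl

theorem nsmul_divNat_add_modNat (u : ι →₀ ℕ) (p : ℕ) : p • u.divNat p + u.modNat p = u := by
  ext i
  simp [Nat.div_add_mod]

theorem modNat_le (u : ι →₀ ℕ) (p : ℕ) : u.modNat p ≤ u := fun _ => Nat.mod_le _ _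

theorem modNat_nsmul_add (p : ℕ) (v w : ι →₀ ℕ) : (p • v + w).modNat p = w.modNat p := by
  ext i
  simp

theorem modNat_eq_self {p : ℕ} {a : ι →₀ ℕ} (ha : ∀ i, a i < p) : a.modNat p = a := by
  ext i
  simp [Nat.mod_eq_of_lt (ha i)]

end Finsupp

namespace MvPowerSeries

section Order

variable {ι R : Type*} [CommSemiring R]

theorem exists_mem_order_eq_forall_le {s : Set (MvPowerSeries ι R)} {f : MvPowerSeries ι R}
    (hfs : f ∈ s) (hf : f ≠ 0) :
    ∃ g ∈ s, ∃ m : ℕ, g.order = m ∧ ∀ x ∈ s, (m : ℕ∞) ≤ x.order := by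
  set g := Function.argminOn order s ⟨f, hfs⟩
  have hmin : ∀ x ∈ s, g.order ≤ x.order := fun x hx => Function.argminOn_le _ _ hx
  obtain ⟨m, hm⟩ := ENat.ne_top_iff_exists.1
    (ne_top_of_le_ne_top (order_eq_top_iff.not.2 hf) (hmin f hfs))
  exact ⟨g, Function.argminOn_mem _ _ _, m, hm.symm, hm ▸ hmin⟩

theorem coeff_X_mul (i : ι) (f : MvPowerSeries ι R) (u : ι →₀ ℕ) :
    coeff u (X i * f) =
      if Finsupp.single i 1 ≤ u then coeff (u - Finsupp.single i 1) f else 0 := by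
  rw [X, coeff_monomial_mul, one_mul]

theorem exists_eq_sum_X_mul [Fintype ι] {n : ℕ} {f : MvPowerSeries ι R}
    (hf : ((n + 1 : ℕ) : ℕ∞) ≤ f.order) :
    ∃ g : ι → MvPowerSeries ι R, f = ∑ i, X i * g i ∧ ∀ i, (n : ℕ∞) ≤ (g i).order := by
  classical
  have hf0 : coeff 0 f = 0 := coeff_of_lt_order (lt_of_lt_of_le (by simp) hf)
  rcases isEmpty_or_nonempty ι with hι | hι
  · refine ⟨0, ?_, by simp⟩
    ext u
    rw [Subsingleton.elim u 0, hf0]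
    simp
  choose! lead hlead using fun (u : ι →₀ ℕ) (hu : u ≠ 0) => by
    simpa using Finsupp.ne_iff.1 hu
  let g : ι → MvPowerSeries ι R := fun i v =>
    if lead (v + Finsupp.single i 1) = i then coeff (v + Finsupp.single i 1) f else 0
  have hg : ∀ i v, coeff v (g i) =
      if lead (v + Finsupp.single i 1) = i then coeff (v + Finsupp.single i 1) f else 0 :=
    fun _ _ => rfl
  refine ⟨g, ?_, fun i => nat_le_order fun v hv => ?_⟩
  · ext u
    rw [map_sum]
    by_cases hu : u = 0
    · subst hu
      simp [coeff_X_mul, hf0]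
    have hle : Finsupp.single (lead u) 1 ≤ u :=
      Finsupp.single_le_iff.2 (Nat.one_le_iff_ne_zero.2 (hlead u hu))
    rw [Finset.sum_eq_single (lead u)]
    · rw [coeff_X_mul, if_pos hle, hg, tsub_add_cancel_of_le hle, if_pos rfl]
    · intro i _ hi
      rw [coeff_X_mul]
      split_ifs with h
      · rw [hg, tsub_add_cancel_of_le h, if_neg (Ne.symm hi)]
      · rfl
    · simp
  · rw [hg]
    split_ifs
    · exact coeff_of_lt_order (lt_of_lt_of_le (by simpa using hv) hf)
    · rfl

theorem mem_span_X_pow_of_le_order [Fintype ι] {n : ℕ} {f : MvPowerSeries ι R}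
    (hf : n ≤ f.order) : f ∈ Ideal.span (Set.range (X : ι → MvPowerSeries ι R)) ^ n := by
  induction n generalizing f with
  | zero => simp
  | succ n ih =>
    obtain ⟨g, rfl, hg⟩ := exists_eq_sum_X_mul hf
    rw [pow_succ']
    exact Ideal.sum_mem _ fun i _ => Ideal.mul_mem_mul (Ideal.subset_span ⟨i, rfl⟩) (ih (hg i))

end Order

section Frobenius

open Finsupp
open scoped nonZeroDivisors

variable {ι k : Type*} [CommRing k] {p : ℕ}

structure IsFrobeniusLift (p : ℕ) (σ : MvPowerSeries ι k →+* MvPowerSeries ι k) : Prop where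
  coeff_nsmul : ∀ f (n : ι →₀ ℕ), coeff (p • n) (σ f) = coeff n f ^ p
  coeff_eq_zero : ∀ f (m : ι →₀ ℕ), (∀ n, m ≠ p • n) → coeff m (σ f) = 0

/-- The coefficient of `Tᵃ` in `f = ∑_{aᵢ < p} Tᵃ σ(fₐ)`, see `map_frobComponent_mul_monomial`. -/
noncomputable def frobComponent (p : ℕ) [ExpChar k p] [PerfectRing k p] (a : ι →₀ ℕ) :
    MvPowerSeries ι k →+ MvPowerSeries ι k where
  toFun f q := (frobeniusEquiv k p).symm (coeff (p • q + a) f)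
  map_zero' := by
    ext q
    change (frobeniusEquiv k p).symm (coeff _ 0) = coeff q 0
    simp
  map_add' f g := by
    ext q
    change (frobeniusEquiv k p).symm (coeff _ (f + g)) =
      (frobeniusEquiv k p).symm (coeff _ f) + (frobeniusEquiv k p).symm (coeff _ g)
    rw [map_add, map_add]

theorem coeff_frobComponent [ExpChar k p] [PerfectRing k p] (a q : ι →₀ ℕ)
    (f : MvPowerSeries ι k) :
    coeff q (frobComponent p a f) = (frobeniusEquiv k p).symm (coeff (p • q + a) f) := rfl

open scoped Classical in
noncomputable def frobSlice (p : ℕ) (a : ι →₀ ℕ) (f : MvPowerSeries ι k) : MvPowerSeries ι k :=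
  fun u => if u.modNat p = a then coeff u f else 0

open scoped Classical in
theorem coeff_frobSlice (a u : ι →₀ ℕ) (f : MvPowerSeries ι k) :
    coeff u (frobSlice p a f) = if u.modNat p = a then coeff u f else 0 := rfl

namespace IsFrobeniusLift

variable {σ : MvPowerSeries ι k →+* MvPowerSeries ι k}

theorem modNat_eq_of_coeff_ne_zero (hσ : IsFrobeniusLift p σ) {s : MvPowerSeries ι k}
    {v w : ι →₀ ℕ} (h : coeff v (σ s) ≠ 0) : (v + w).modNat p = w.modNat p := by
  by_contra hvw
  exact h (hσ.coeff_eq_zero s v fun n hn => hvw (hn ▸ modNat_nsmul_add p n w))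

theorem frobSlice_map_mul (hσ : IsFrobeniusLift p σ) (a : ι →₀ ℕ)
    (s f : MvPowerSeries ι k) : frobSlice p a (σ s * f) = σ s * frobSlice p a f := by
  classical
  ext u
  rw [coeff_frobSlice, coeff_mul, coeff_mul]
  have hterm : ∀ x ∈ Finset.HasAntidiagonal.antidiagonal u,
      coeff x.1 (σ s) * coeff x.2 (frobSlice p a f) =
        if u.modNat p = a then coeff x.1 (σ s) * coeff x.2 f else 0 := by
    rintro ⟨v, w⟩ hvw
    rw [Finset.HasAntidiagonal.mem_antidiagonal] at hvw
    subst hvw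
    by_cases hv : coeff v (σ s) = 0
    · simp [hv]
    · rw [coeff_frobSlice, hσ.modNat_eq_of_coeff_ne_zero hv]
      split_ifs <;> simp
  rw [Finset.sum_congr rfl hterm, Finset.sum_ite_irrel, Finset.sum_const_zero]

variable [ExpChar k p] [PerfectRing k p]

theorem injective (hσ : IsFrobeniusLift p σ) : Function.Injective σ := by
  intro f g h
  ext n
  apply (frobeniusEquiv k p).injective
  rw [frobeniusEquiv_apply, frobeniusEquiv_apply, frobenius_def, frobenius_def,
    ← hσ.coeff_nsmul, ← hσ.coeff_nsmul, h]

theorem map_frobComponent_mul_monomial (hσ : IsFrobeniusLift p σ)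
    {a : ι →₀ ℕ} (ha : ∀ i, a i < p) (f : MvPowerSeries ι k) :
    σ (frobComponent p a f) * monomial a 1 = frobSlice p a f := by
  classical
  ext u
  rw [coeff_mul_monomial, coeff_frobSlice, mul_one]
  by_cases hu : u.modNat p = a
  · have hle : a ≤ u := hu ▸ modNat_le u p
    have hsub : u - a = p • u.divNat p := by
      rw [← hu, tsub_eq_iff_eq_add_of_le (modNat_le u p), nsmul_divNat_add_modNat]
    rw [if_pos hle, if_pos hu, hsub, hσ.coeff_nsmul, coeff_frobComponent, ← hu,
      nsmul_divNat_add_modNat, frobeniusEquiv_symm_pow_p]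
  · rw [if_neg hu]
    split_ifs with hle
    · refine hσ.coeff_eq_zero _ _ fun n hn => hu ?_
      rw [← tsub_add_cancel_of_le hle, hn, modNat_nsmul_add, modNat_eq_self ha]
    · rfl

theorem frobComponent_map_mul (hσ : IsFrobeniusLift p σ) {a : ι →₀ ℕ} (ha : ∀ i, a i < p)
    (s f : MvPowerSeries ι k) : frobComponent p a (σ s * f) = s * frobComponent p a f := by
  apply hσ.injective
  have hX : (monomial a (1 : k) : MvPowerSeries ι k) ∈ (MvPowerSeries ι k)⁰ :=
    monomial_mem_nonzeroDivisors.2 (Submonoid.one_mem _)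
  rw [← mul_cancel_right_mem_nonZeroDivisors hX, hσ.map_frobComponent_mul_monomial ha,
    hσ.frobSlice_map_mul, map_mul, mul_assoc, hσ.map_frobComponent_mul_monomial ha]

end IsFrobeniusLift

theorem le_order_of_le_order_frobComponent [ExpChar k p] [PerfectRing k p] (hp : 0 < p)
    {n : ℕ} {f : MvPowerSeries ι k}
    (h : ∀ a : ι →₀ ℕ, (∀ i, a i < p) → (n : ℕ∞) ≤ (frobComponent p a f).order) :
    ((p * n : ℕ) : ℕ∞) ≤ f.order := by
  refine nat_le_order fun u hu => ?_
  have hdeg : p * (u.divNat p).degree ≤ u.degree := by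
    conv_rhs => rw [← nsmul_divNat_add_modNat u p]
    rw [map_add, map_nsmul, smul_eq_mul]
    exact Nat.le_add_right _ _
  have hq := coeff_of_lt_order (f := frobComponent p (u.modNat p) f) (d := u.divNat p)
    (lt_of_lt_of_le (by exact_mod_cast Nat.lt_of_mul_lt_mul_left (hdeg.trans_lt hu))
      (h _ fun i => Nat.mod_lt _ hp))
  rwa [coeff_frobComponent, nsmul_divNat_add_modNat, map_eq_zero_iff _ (RingEquiv.injective _)]
    at hq

end Frobenius

end MvPowerSeries

theorem statement0_general (p : ℕ) (hp : p.Prime) (k : Type) [Field k] [ExpChar k p]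
    [PerfectRing k p] (d : ℕ)
    (σ : MvPowerSeries (Fin d) k →+* MvPowerSeries (Fin d) k)
    (hσ1 : ∀ (f : MvPowerSeries (Fin d) k) (n : (Fin d) →₀ ℕ),
      MvPowerSeries.coeff (p • n) (σ f) = (MvPowerSeries.coeff n f) ^ p)
    (hσ2 : ∀ (f : MvPowerSeries (Fin d) k) (m : (Fin d) →₀ ℕ),
      (∀ n : (Fin d) →₀ ℕ, m ≠ p • n) → MvPowerSeries.coeff m (σ f) = 0)
    (hbar : MvPowerSeries (Fin d) k) (e : ℕ) (he : e ≤ p - 2)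
    (hord2 : hbar ∉ (Ideal.span (Set.range (MvPowerSeries.X : Fin d → MvPowerSeries (Fin d) k))) ^ (e + 1))
    (C : Type) [AddCommGroup C] [Module (MvPowerSeries (Fin d) k) C]
    (f : MvPowerSeries (Fin d) k) (hf : f ≠ 0) (hfC : ∀ c : C, f • c = 0)
    (D : Type) [AddCommGroup D] [Module (MvPowerSeries (Fin d) k) D]
    (ι : C →ₛₗ[σ] D) (hD : IsSigmaBaseChange σ ι)
    (φ : C →ₗ[MvPowerSeries (Fin d) k] D)
    (hcoker : ∀ x : D, ∃ c : C, hbar • x = φ c) :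
    Subsingleton C := by
  open MvPowerSeries in
  have hσ : IsFrobeniusLift p σ := ⟨hσ1, hσ2⟩
  obtain ⟨g, hgC, m, hm, hmin⟩ := exists_mem_order_eq_forall_le
    (s := Module.annihilator (MvPowerSeries (Fin d) k) C) (Module.mem_annihilator.2 hfC) hf
  rcases Nat.eq_zero_or_pos m with rfl | hm0
  · have hg : IsUnit g := isUnit_iff_constantCoeff.2 (isUnit_iff_ne_zero.2
      fun h => order_ne_zero_iff_constCoeff_eq_zero.2 h (by exact_mod_cast hm))
    exact Module.annihilator_eq_top_iff.1 (Ideal.eq_top_of_isUnit_mem _ hgC hg)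
  have hGD : g * hbar ∈ Module.annihilator _ D := Module.mem_annihilator.2 fun x => by
    obtain ⟨c, hc⟩ := hcoker x
    rw [mul_smul, hc, ← map_smul, Module.mem_annihilator.1 hgC, map_zero]
  have hpm : ((p * m : ℕ) : ℕ∞) ≤ (g * hbar).order :=
    le_order_of_le_order_frobComponent hp.pos fun a ha =>
      hmin _ (hD.map_mem_annihilator _ (hσ.frobComponent_map_mul ha) hGD)
  have hhbar : hbar.order < ((e + 1 : ℕ) : ℕ∞) :=
    not_le.1 fun h => hord2 (mem_span_X_pow_of_le_order h)
  rw [order_mul, hm] at hpm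
  have hlt : p * m < m + (e + 1) := by
    exact_mod_cast hpm.trans_lt ((ENat.add_lt_add_iff_left (ENat.natCast_ne_top m)).2 hhbar)
  have hep : e + 2 ≤ p := by have := hp.two_le; omega
  nlinarith

/-- Let `k` be a perfect field of characteristic `p`,
`S̄ = k[[T₁,…,T_d]]` with maximal ideal `r̄ = (T₁,…,T_d)`, and `σ : S̄ → S̄` the
Frobenius-semilinear endomorphism with `σ(Tᵢ) = Tᵢᵖ` (characterized on
coefficients by `coeff (p•n) (σ f) = (coeff n f)^p` and vanishing of all other
coefficients).  Let `hbar ∈ r̄` have order `e ≤ p−2` (i.e. `hbar ∈ r̄^e \ r̄^{e+1}`).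
Let `C` be an `S̄`-module annihilated by some `f ≠ 0` and `φ : C → C^{(σ)}`
an `S̄`-linear map whose cokernel is annihilated by `hbar`.  Then `C = 0`. -/
theorem statement0 (p : ℕ) (hp : p.Prime) (k : Type) [Field k] [CharP k p] [ExpChar k p]
    [PerfectRing k p] (d : ℕ)
    (σ : MvPowerSeries (Fin d) k →+* MvPowerSeries (Fin d) k)
    (hσ1 : ∀ (f : MvPowerSeries (Fin d) k) (n : (Fin d) →₀ ℕ),
      MvPowerSeries.coeff (p • n) (σ f) = (MvPowerSeries.coeff n f) ^ p)
    (hσ2 : ∀ (f : MvPowerSeries (Fin d) k) (m : (Fin d) →₀ ℕ),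
      (∀ n : (Fin d) →₀ ℕ, m ≠ p • n) → MvPowerSeries.coeff m (σ f) = 0)
    (hbar : MvPowerSeries (Fin d) k) (e : ℕ) (he : e ≤ p - 2)
    (hmem : hbar ∈ Ideal.span (Set.range (MvPowerSeries.X : Fin d → MvPowerSeries (Fin d) k)))
    (hord1 : hbar ∈ (Ideal.span (Set.range (MvPowerSeries.X : Fin d → MvPowerSeries (Fin d) k))) ^ e)
    (hord2 : hbar ∉ (Ideal.span (Set.range (MvPowerSeries.X : Fin d → MvPowerSeries (Fin d) k))) ^ (e + 1))
    (C : Type) [AddCommGroup C] [Module (MvPowerSeries (Fin d) k) C]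
    (f : MvPowerSeries (Fin d) k) (hf : f ≠ 0) (hfC : ∀ c : C, f • c = 0)
    (D : Type) [AddCommGroup D] [Module (MvPowerSeries (Fin d) k) D]
    (ι : C →ₛₗ[σ] D) (hD : IsSigmaBaseChange σ ι)
    (φ : C →ₗ[MvPowerSeries (Fin d) k] D)
    (hcoker : ∀ x : D, ∃ c : C, hbar • x = φ c) :
    Subsingleton C :=
  statement0_general p hp k d σ hσ1 hσ2 hbar e he hord2 C f hf hfC D ι hD φ hcoker
end

section
/- Let k be a field of characteristic p (prime) and S̄ = k[[T₁,T₂]] with r̄ = (T₁,T₂). Suppose h̄ ∈ (T₁ᵖ, T₂ᵖ, T₁^{p−1}T₂^{p−1}) ⊂ S̄. Then there exists a nonzero S̄-module C of finite length together with an S̄-linear map φ: C → C^{(σ)} whose cokernel is annihilated by h̄; explicitly, C = k = S̄/(T₁,T₂), C^{(σ)} = S̄/(T₁ᵖ,T₂ᵖ), and φ(1) = T₁^{p−1}T₂^{p−1} mod (T₁ᵖ,T₂ᵖ) works. -/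
namespace MvPowerSeries

variable {ι R : Type*}

theorem eq_X_pow_of_coeff [CommSemiring R] {p : ℕ} (hp : p ≠ 0) {i : ι}
    {g : MvPowerSeries ι R} (h₁ : ∀ n, coeff (p • n) g = coeff n (X i) ^ p)
    (h₂ : ∀ m, (∀ n, m ≠ p • n) → coeff m g = 0) : g = X i ^ p := by
  classical
  have hsingle : Finsupp.single i p = p • Finsupp.single i 1 := by simp
  ext m
  rw [coeff_X_pow, hsingle]
  by_cases hm : ∃ n, m = p • n
  · obtain ⟨n, rfl⟩ := hm
    simp only [h₁, coeff_X, (nsmul_right_injective hp).eq_iff]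
    split_ifs <;> simp [hp]
  · push Not at hm
    rw [h₂ m hm, if_neg (hm _)]

theorem ker_constantCoeff_fin_two [CommRing R] :
    RingHom.ker (constantCoeff : MvPowerSeries (Fin 2) R →+* R) = Ideal.span {X 0, X 1} := by
  refine le_antisymm (fun f hf => ?_) (Ideal.span_le.mpr ?_)
  · -- `f₀` is `f` with `X 0` set to `0`
    let f₀ : MvPowerSeries (Fin 2) R := fun m => if m 0 = 0 then coeff m f else 0
    have hf₀ (m) : coeff m f₀ = if m 0 = 0 then coeff m f else 0 := rfl
    obtain ⟨a, ha⟩ : X 0 ∣ f - f₀ := X_dvd_iff.mpr fun m hm => by simp [hf₀, hm]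
    obtain ⟨b, hb⟩ : X 1 ∣ f₀ := X_dvd_iff.mpr fun m hm => by
      rw [hf₀]
      split_ifs with h0
      · obtain rfl : m = 0 := by ext j; fin_cases j <;> assumption
        exact hf
      · rfl
    refine Ideal.mem_span_pair.mpr ⟨a, b, ?_⟩
    rw [mul_comm a, mul_comm b, ← ha, ← hb, sub_add_cancel]
  · rintro _ (rfl | rfl) <;> simp

theorem isMaximal_span_X_fin_two {k : Type*} [Field k] :
    (Ideal.span {X 0, X 1} : Ideal (MvPowerSeries (Fin 2) k)).IsMaximal :=
  ker_constantCoeff_fin_two (R := k) ▸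
    RingHom.ker_isMaximal_of_surjective _ fun a => ⟨C a, constantCoeff_C _⟩

end MvPowerSeries

namespace Ideal

variable {S : Type} [CommRing S]

def quotientMapₛₗ (σ : S →+* S) {I : Ideal S} (J : Ideal S) (h : I ≤ J.comap σ) :
    S ⧸ I →ₛₗ[σ] S ⧸ J where
  toFun := quotientMap J σ h
  map_add' := map_add _
  map_smul' r x := by
    obtain ⟨a, rfl⟩ := Quotient.mk_surjective x
    exact map_mul (quotientMap J σ h) (Quotient.mk I r) (Quotient.mk I a)

theorem quotientMapₛₗ_mk (σ : S →+* S) {I : Ideal S} (J : Ideal S) (h : I ≤ J.comap σ) (a : S) :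
    quotientMapₛₗ σ J h (Quotient.mk I a) = Quotient.mk J (σ a) :=
  rfl

theorem isSigmaBaseChange_quotientMapₛₗ (σ : S →+* S) {I J : Ideal S} (h : I ≤ J.comap σ)
    (hJ : J ≤ I.map σ) : IsSigmaBaseChange σ (quotientMapₛₗ σ J h) := by
  intro E _ _ j
  have hmk {K : Ideal S} (a : S) : Quotient.mk K a = a • 1 := by
    rw [← Quotient.algebraMap_eq, Algebra.algebraMap_eq_smul_one]
  have hker : J ≤ LinearMap.ker (LinearMap.toSpanSingleton S E (j 1)) := by
    refine hJ.trans (map_le_iff_le_comap.mpr fun a ha => ?_)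
    rw [mem_comap, LinearMap.mem_ker, LinearMap.toSpanSingleton_apply,
      ← j.map_smulₛₗ, ← hmk, Quotient.eq_zero_iff_mem.mpr ha, map_zero]
  refine ⟨J.liftQ _ hker, fun c => ?_, fun g hg => ?_⟩
  · obtain ⟨s, rfl⟩ := Quotient.mk_surjective c
    rw [quotientMapₛₗ_mk, ← Quotient.mk_eq_mk, Submodule.liftQ_apply, hmk s, j.map_smulₛₗ,
      LinearMap.toSpanSingleton_apply]
  · refine Submodule.linearMap_qext _ (LinearMap.ext_ring ?_)
    have h1 : quotientMapₛₗ σ J h 1 = 1 := map_one (quotientMap J σ h)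
    simp only [LinearMap.comp_apply, Submodule.mkQ_apply, Submodule.liftQ_apply,
      LinearMap.toSpanSingleton_apply, one_smul]
    rw [← hg 1, h1]
    rfl

def mulQuotientMap (I J : Ideal S) (h : S) (hI : ∀ a ∈ I, a * h ∈ J) : S ⧸ I →ₗ[S] S ⧸ J :=
  I.liftQ (LinearMap.toSpanSingleton S (S ⧸ J) (Quotient.mk J h)) fun a ha => by
    rw [LinearMap.mem_ker, LinearMap.toSpanSingleton_apply, Algebra.smul_def,
      Quotient.algebraMap_eq, ← map_mul, Quotient.eq_zero_iff_mem]
    exact hI a ha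

theorem mulQuotientMap_mk {I J : Ideal S} {h : S} (hI : ∀ a ∈ I, a * h ∈ J) (s : S) :
    mulQuotientMap I J h hI (Quotient.mk I s) = Quotient.mk J (s * h) :=
  rfl

/-- The cokernel of multiplication by `h` is `S ⧸ (J + (h))`. -/
theorem exists_mulQuotientMap_eq_smul {I J : Ideal S} {h : S} (hI : ∀ a ∈ I, a * h ∈ J) {a : S}
    (ha : a ∈ J ⊔ span {h}) (x : S ⧸ J) : ∃ c, a • x = mulQuotientMap I J h hI c := by
  obtain ⟨b, hb, _, ht, rfl⟩ := Submodule.mem_sup.mp ha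
  obtain ⟨c, rfl⟩ := mem_span_singleton'.mp ht
  obtain ⟨s, rfl⟩ := Quotient.mk_surjective x
  refine ⟨Quotient.mk I (c * s), ?_⟩
  rw [mulQuotientMap_mk, Algebra.smul_def, Quotient.algebraMap_eq, ← map_mul,
    Quotient.mk_eq_mk_iff_sub_mem]
  convert J.mul_mem_right s hb using 1
  ring

theorem mul_pow_mul_pow_mem_span_pow_succ {x y a : S} (n : ℕ) (ha : a ∈ span {x, y}) :
    a * (x ^ n * y ^ n) ∈ span {x ^ (n + 1), y ^ (n + 1)} := by
  obtain ⟨u, v, rfl⟩ := mem_span_pair.mp ha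
  exact mem_span_pair.mpr ⟨u * y ^ n, v * x ^ n, by ring⟩

end Ideal

open MvPowerSeries

theorem isFiniteLength_quotient_of_isMaximal {R : Type*} [CommRing R] (m : Ideal R)
    [m.IsMaximal] : IsFiniteLength R (R ⧸ m) := by
  have : IsSimpleModule R (R ⧸ m) := isSimpleModule_iff_isCoatom.mpr Ideal.IsMaximal.out
  rw [← Module.length_ne_top_iff, Module.length_eq_one]
  exact ENat.one_ne_top

theorem statement2_general (p : ℕ) (hp : p.Prime) (k : Type) [Field k]
    (σ : MvPowerSeries (Fin 2) k →+* MvPowerSeries (Fin 2) k)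
    (hσ1 : ∀ (f : MvPowerSeries (Fin 2) k) (n : (Fin 2) →₀ ℕ),
      MvPowerSeries.coeff (p • n) (σ f) = (MvPowerSeries.coeff n f) ^ p)
    (hσ2 : ∀ (f : MvPowerSeries (Fin 2) k) (m : (Fin 2) →₀ ℕ),
      (∀ n : (Fin 2) →₀ ℕ, m ≠ p • n) → MvPowerSeries.coeff m (σ f) = 0)
    (hbar : MvPowerSeries (Fin 2) k)
    (hmem : hbar ∈ Ideal.span {(MvPowerSeries.X 0 : MvPowerSeries (Fin 2) k) ^ p,
      MvPowerSeries.X 1 ^ p, MvPowerSeries.X 0 ^ (p - 1) * MvPowerSeries.X 1 ^ (p - 1)}) :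
    ∃ (ι : (MvPowerSeries (Fin 2) k ⧸
            Ideal.span {(MvPowerSeries.X 0 : MvPowerSeries (Fin 2) k), MvPowerSeries.X 1}) →ₛₗ[σ]
          (MvPowerSeries (Fin 2) k ⧸
            Ideal.span {(MvPowerSeries.X 0 : MvPowerSeries (Fin 2) k) ^ p, MvPowerSeries.X 1 ^ p}))
      (φ : (MvPowerSeries (Fin 2) k ⧸
            Ideal.span {(MvPowerSeries.X 0 : MvPowerSeries (Fin 2) k), MvPowerSeries.X 1}) →ₗ[MvPowerSeries (Fin 2) k]
          (MvPowerSeries (Fin 2) k ⧸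
            Ideal.span {(MvPowerSeries.X 0 : MvPowerSeries (Fin 2) k) ^ p, MvPowerSeries.X 1 ^ p})),
      IsSigmaBaseChange σ ι ∧
      Nontrivial (MvPowerSeries (Fin 2) k ⧸
        Ideal.span {(MvPowerSeries.X 0 : MvPowerSeries (Fin 2) k), MvPowerSeries.X 1}) ∧
      IsFiniteLength (MvPowerSeries (Fin 2) k)
        (MvPowerSeries (Fin 2) k ⧸
          Ideal.span {(MvPowerSeries.X 0 : MvPowerSeries (Fin 2) k), MvPowerSeries.X 1}) ∧
      -- the cokernel of `φ` is annihilated by `h̄`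
      (∀ x : (MvPowerSeries (Fin 2) k ⧸
          Ideal.span {(MvPowerSeries.X 0 : MvPowerSeries (Fin 2) k) ^ p, MvPowerSeries.X 1 ^ p}),
        ∃ c, hbar • x = φ c) ∧
      -- explicitly, `φ(1) = T₁^{p−1}T₂^{p−1}`
      φ (Ideal.Quotient.mk _ 1) =
        Ideal.Quotient.mk _ (MvPowerSeries.X 0 ^ (p - 1) * MvPowerSeries.X 1 ^ (p - 1)) := by
  set I : Ideal (MvPowerSeries (Fin 2) k) := Ideal.span {X 0, X 1}
  set J : Ideal (MvPowerSeries (Fin 2) k) := Ideal.span {X 0 ^ p, X 1 ^ p}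
  set h : MvPowerSeries (Fin 2) k := X 0 ^ (p - 1) * X 1 ^ (p - 1)
  have hσX (i : Fin 2) : σ (X i) = X i ^ p := eq_X_pow_of_coeff hp.ne_zero (hσ1 _) (hσ2 _)
  have hIJ : I.map σ = J := by rw [Ideal.map_span, Set.image_pair, hσX, hσX]
  have hmul (a) (ha : a ∈ I) : a * h ∈ J := by
    have := Ideal.mul_pow_mul_pow_mem_span_pow_succ (p - 1) ha
    rwa [Nat.sub_add_cancel hp.one_le] at this
  have hbarJh : hbar ∈ J ⊔ Ideal.span {h} := by
    rwa [Ideal.span_insert, Ideal.span_insert, ← sup_assoc, ← Ideal.span_insert] at hmem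
  have hI : I.IsMaximal := isMaximal_span_X_fin_two
  refine ⟨Ideal.quotientMapₛₗ σ J (Ideal.map_le_iff_le_comap.mp hIJ.le),
    Ideal.mulQuotientMap I J h hmul, Ideal.isSigmaBaseChange_quotientMapₛₗ σ _ hIJ.ge,
    Ideal.Quotient.nontrivial_iff.mpr hI.ne_top, isFiniteLength_quotient_of_isMaximal I,
    Ideal.exists_mulQuotientMap_eq_smul hmul hbarJh, ?_⟩
  rw [Ideal.mulQuotientMap_mk, one_mul]

/-- Let `k` be a field of characteristic `p` and
`S̄ = k[[T₁,T₂]]`.  Suppose `h̄ ∈ (T₁ᵖ, T₂ᵖ, T₁^{p−1}T₂^{p−1})`.  Then there is a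
nonzero finite-length `S̄`-module `C` with an `S̄`-linear map
`φ : C → C^{(σ)}` whose cokernel is annihilated by `h̄`; explicitly
`C = S̄/(T₁,T₂) = k`, `C^{(σ)} = S̄/(T₁ᵖ,T₂ᵖ)` and
`φ(1) = T₁^{p−1}T₂^{p−1} mod (T₁ᵖ,T₂ᵖ)` works. -/
theorem statement2 (p : ℕ) (hp : p.Prime) (k : Type) [Field k] [CharP k p]
    (σ : MvPowerSeries (Fin 2) k →+* MvPowerSeries (Fin 2) k)
    (hσ1 : ∀ (f : MvPowerSeries (Fin 2) k) (n : (Fin 2) →₀ ℕ),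
      MvPowerSeries.coeff (p • n) (σ f) = (MvPowerSeries.coeff n f) ^ p)
    (hσ2 : ∀ (f : MvPowerSeries (Fin 2) k) (m : (Fin 2) →₀ ℕ),
      (∀ n : (Fin 2) →₀ ℕ, m ≠ p • n) → MvPowerSeries.coeff m (σ f) = 0)
    (hbar : MvPowerSeries (Fin 2) k)
    (hmem : hbar ∈ Ideal.span {(MvPowerSeries.X 0 : MvPowerSeries (Fin 2) k) ^ p,
      MvPowerSeries.X 1 ^ p, MvPowerSeries.X 0 ^ (p - 1) * MvPowerSeries.X 1 ^ (p - 1)}) :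
    ∃ (ι : (MvPowerSeries (Fin 2) k ⧸
            Ideal.span {(MvPowerSeries.X 0 : MvPowerSeries (Fin 2) k), MvPowerSeries.X 1}) →ₛₗ[σ]
          (MvPowerSeries (Fin 2) k ⧸
            Ideal.span {(MvPowerSeries.X 0 : MvPowerSeries (Fin 2) k) ^ p, MvPowerSeries.X 1 ^ p}))
      (φ : (MvPowerSeries (Fin 2) k ⧸
            Ideal.span {(MvPowerSeries.X 0 : MvPowerSeries (Fin 2) k), MvPowerSeries.X 1}) →ₗ[MvPowerSeries (Fin 2) k]
          (MvPowerSeries (Fin 2) k ⧸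
            Ideal.span {(MvPowerSeries.X 0 : MvPowerSeries (Fin 2) k) ^ p, MvPowerSeries.X 1 ^ p})),
      IsSigmaBaseChange σ ι ∧
      Nontrivial (MvPowerSeries (Fin 2) k ⧸
        Ideal.span {(MvPowerSeries.X 0 : MvPowerSeries (Fin 2) k), MvPowerSeries.X 1}) ∧
      IsFiniteLength (MvPowerSeries (Fin 2) k)
        (MvPowerSeries (Fin 2) k ⧸
          Ideal.span {(MvPowerSeries.X 0 : MvPowerSeries (Fin 2) k), MvPowerSeries.X 1}) ∧
      -- the cokernel of `φ` is annihilated by `h̄`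
      (∀ x : (MvPowerSeries (Fin 2) k ⧸
          Ideal.span {(MvPowerSeries.X 0 : MvPowerSeries (Fin 2) k) ^ p, MvPowerSeries.X 1 ^ p}),
        ∃ c, hbar • x = φ c) ∧
      -- explicitly, `φ(1) = T₁^{p−1}T₂^{p−1}`
      φ (Ideal.Quotient.mk _ 1) =
        Ideal.Quotient.mk _ (MvPowerSeries.X 0 ^ (p - 1) * MvPowerSeries.X 1 ^ (p - 1)) :=
  statement2_general p hp k σ hσ1 hσ2 hbar hmem
end

section
/- Let S̄ = k[[T₁,…,T_d]] over a field k of characteristic p and let σ be the Frobenius endomorphism with σ(Tᵢ)=Tᵢᵖ (acting by p-th powers on k when k is perfect). Then σ: S̄ → S̄ is faithfully flat, and for every ideal a ⊆ S̄, the extended ideal σ(a)S̄ equals a^{(p)}, the ideal generated by the p-th powers of elements of a. Moreover for ideals a, b one has a^{(p)} ∩ b^{(p)} = (a ∩ b)^{(p)}. -/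
/-!
The hypotheses on `σ` pin down all coefficients of `σ f`, and `f ↦ f ^ p` has the same ones, so
`σ` is the Frobenius; this gives `σ(a)S̄ = a^{(p)}` at once. Every exponent is uniquely `p • n + e`
with digits `0 ≤ e i < p`, and `k` is perfect, so every `g` is uniquely `∑ₑ gₑ ^ p * X ^ e`: the
digit monomials form a basis of `S̄` over `σ`, which is therefore free, hence faithfully flat.
Moreover `g ∈ σ(a)S̄` iff all coordinates `gₑ` lie in `a`, so extension commutes with intersections.
-/

/-- `S`, viewed as a module over itself via the ring endomorphism `σ`
(so `s • t = σ s * t`).  Flatness / faithful flatness of this module is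
flatness / faithful flatness of the ring homomorphism `σ`. -/
def FrobTwist (S : Type) [CommRing S] (σ : S →+* S) : Type := S

instance {S : Type} [CommRing S] (σ : S →+* S) : AddCommGroup (FrobTwist S σ) :=
  inferInstanceAs (AddCommGroup S)

instance {S : Type} [CommRing S] (σ : S →+* S) : Module S (FrobTwist S σ) :=
  Module.compHom S σ

namespace Finsupp

variable {ι : Type*} [Fintype ι] (p : ℕ)

noncomputable def ofDigits (e : ι → Fin p) : ι →₀ ℕ := equivFunOnFinite.symm fun i => e i

theorem nsmul_add_ofDigits_injective :
    Function.Injective fun ne : (ι →₀ ℕ) × (ι → Fin p) => p • ne.1 + ofDigits p ne.2 := by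
  rintro ⟨n, e⟩ ⟨n', e'⟩ h
  have hi (i : ι) : p * n i + e i = p * n' i + e' i := by
    simpa [ofDigits] using DFunLike.congr_fun h i
  have he (i : ι) : (e i : ℕ) = e' i := by
    simpa [Nat.mod_eq_of_lt] using congrArg (· % p) (hi i)
  have hn (i : ι) : n i = n' i :=
    Nat.eq_of_mul_eq_mul_left (e i).pos (by simpa [he i] using hi i)
  simp only [Prod.mk.injEq]
  exact ⟨Finsupp.ext hn, funext fun i => Fin.ext (he i)⟩

theorem nsmul_add_ofDigits_surjective (hp : p ≠ 0) :
    Function.Surjective fun ne : (ι →₀ ℕ) × (ι → Fin p) => p • ne.1 + ofDigits p ne.2 := by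
  intro m
  refine ⟨(m.mapRange (· / p) (Nat.zero_div p), fun i => ⟨m i % p, Nat.mod_lt _ hp.bot_lt⟩), ?_⟩
  ext i
  simp [ofDigits, Nat.div_add_mod]

end Finsupp

namespace MvPowerSeries

open Finsupp

section ExpChar

variable {ι R : Type*} [CommRing R] (p : ℕ) [ExpChar R p]

instance : ExpChar (MvPowerSeries ι R) p := expChar_of_injective_ringHom C_injective p

theorem coeff_nsmul_pow_expChar (f : MvPowerSeries ι R) (n : ι →₀ ℕ) :
    coeff (p • n) (f ^ p) = coeff n f ^ p := by
  rw [← map_frobenius_expand p (expChar_ne_zero R p), coeff_map, coeff_expand_smul, frobenius_def]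

theorem coeff_pow_expChar_of_forall_ne (f : MvPowerSeries ι R) {m : ι →₀ ℕ}
    (hm : ∀ n, m ≠ p • n) : coeff m (f ^ p) = 0 := by
  obtain ⟨i, hi⟩ : ∃ i, ¬ p ∣ m i := by
    by_contra! h
    exact hm (m.mapRange (· / p) (Nat.zero_div p)) (by ext i; simp [Nat.mul_div_cancel' (h i)])
  rw [← map_frobenius_expand p (expChar_ne_zero R p), coeff_map,
    coeff_expand_of_not_dvd p _ _ hi, map_zero]

theorem ringHom_eq_frobenius {F : MvPowerSeries ι R →+* MvPowerSeries ι R}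
    (hF : ∀ f n, coeff (p • n) (F f) = coeff n f ^ p)
    (hF' : ∀ f m, (∀ n, m ≠ p • n) → coeff m (F f) = 0) :
    F = frobenius (MvPowerSeries ι R) p := by
  ext f m
  rw [frobenius_def]
  by_cases! hm : ∃ n, m = p • n
  · obtain ⟨n, rfl⟩ := hm
    rw [hF, coeff_nsmul_pow_expChar]
  · rw [hF' f m hm, coeff_pow_expChar_of_forall_ne p f hm]

variable [Fintype ι]

theorem coeff_nsmul_add_ofDigits_pow_mul_monomial (c : MvPowerSeries ι R) (n : ι →₀ ℕ)
    (e e' : ι → Fin p) :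
    coeff (p • n + ofDigits p e) (c ^ p * monomial (ofDigits p e') 1) =
      if e' = e then coeff n c ^ p else 0 := by
  rw [coeff_mul_monomial, mul_one]
  split_ifs with hle he he
  · subst he
    rw [add_tsub_cancel_right, coeff_nsmul_pow_expChar]
  · refine coeff_pow_expChar_of_forall_ne p c fun n' hn' => he ?_
    exact congrArg Prod.snd <| nsmul_add_ofDigits_injective p (a₁ := (n', e')) (a₂ := (n, e))
      ((tsub_eq_iff_eq_add_of_le hle).mp hn').symm
  · exact absurd le_add_self (he ▸ hle)
  · rfl

end ExpChar

section PerfectRing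

variable {ι R : Type*} [Fintype ι] [CommRing R] (p : ℕ) [ExpChar R p] [PerfectRing R p]

noncomputable def frobeniusCoord (e : ι → Fin p) : MvPowerSeries ι R →+ MvPowerSeries ι R where
  toFun g n := (frobeniusEquiv R p).symm (coeff (p • n + ofDigits p e) g)
  map_zero' := by ext n; exact map_zero (frobeniusEquiv R p).symm
  map_add' g h := by ext n; exact map_add (frobeniusEquiv R p).symm _ _

theorem coeff_frobeniusCoord (e : ι → Fin p) (g : MvPowerSeries ι R) (n : ι →₀ ℕ) :
    coeff n (frobeniusCoord p e g) = (frobeniusEquiv R p).symm (coeff (p • n + ofDigits p e) g) :=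
  rfl

variable [DecidableEq ι]

theorem sum_frobeniusCoord_pow_mul_monomial (g : MvPowerSeries ι R) :
    ∑ e, frobeniusCoord p e g ^ p * monomial (ofDigits p e) 1 = g := by
  ext m
  obtain ⟨⟨n, e⟩, rfl⟩ := nsmul_add_ofDigits_surjective p (expChar_ne_zero R p) m
  simp only [map_sum, coeff_nsmul_add_ofDigits_pow_mul_monomial, Finset.sum_ite_eq',
    Finset.mem_univ, if_true, coeff_frobeniusCoord]
  exact (frobeniusEquiv R p).apply_symm_apply _

theorem frobeniusCoord_sum_pow_mul_monomial (c : (ι → Fin p) → MvPowerSeries ι R)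
    (e : ι → Fin p) :
    frobeniusCoord p e (∑ e', c e' ^ p * monomial (ofDigits p e') 1) = c e := by
  ext n
  rw [coeff_frobeniusCoord, map_sum]
  simp only [coeff_nsmul_add_ofDigits_pow_mul_monomial, Finset.sum_ite_eq', Finset.mem_univ,
    if_true]
  exact (frobeniusEquiv R p).symm_apply_apply _

theorem frobeniusCoord_pow_mul (e : ι → Fin p) (s t : MvPowerSeries ι R) :
    frobeniusCoord p e (s ^ p * t) = s * frobeniusCoord p e t := by
  conv_lhs => rw [← sum_frobeniusCoord_pow_mul_monomial p t]
  simp_rw [Finset.mul_sum, ← mul_assoc, ← mul_pow]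
  exact frobeniusCoord_sum_pow_mul_monomial p _ e

theorem mem_map_frobenius_iff (a : Ideal (MvPowerSeries ι R)) (g : MvPowerSeries ι R) :
    g ∈ a.map (frobenius _ p) ↔ ∀ e, frobeniusCoord p e g ∈ a := by
  refine ⟨fun hg e => ?_, fun h => ?_⟩
  · obtain ⟨n, c, x, rfl⟩ := Submodule.mem_span_set'.mp hg
    rw [map_sum]
    refine a.sum_mem fun i _ => ?_
    obtain ⟨f, hf, hfx⟩ := (x i).2
    rw [smul_eq_mul, ← hfx, frobenius_def, mul_comm, frobeniusCoord_pow_mul]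
    exact a.mul_mem_right _ hf
  · rw [← sum_frobeniusCoord_pow_mul_monomial p g]
    exact Ideal.sum_mem _ fun e _ => Ideal.mul_mem_right _ _ (a.mem_map_of_mem _ (h e))

theorem map_frobenius_inf (a b : Ideal (MvPowerSeries ι R)) :
    (a ⊓ b).map (frobenius _ p) = a.map (frobenius _ p) ⊓ b.map (frobenius _ p) := by
  ext g
  simp only [Ideal.mem_inf, mem_map_frobenius_iff, forall_and]

end PerfectRing

section FrobTwist

variable {ι R : Type} [Fintype ι] [DecidableEq ι] [CommRing R] (p : ℕ) [ExpChar R p]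
  [PerfectRing R p]

noncomputable def frobTwistEquivPi :
    FrobTwist (MvPowerSeries ι R) (frobenius _ p) ≃ₗ[MvPowerSeries ι R]
      ((ι → Fin p) → MvPowerSeries ι R) where
  toFun g e := frobeniusCoord (R := R) p e g
  invFun c := ∑ e, c e ^ p * monomial (ofDigits p e) 1
  map_add' g h := funext fun e => map_add (frobeniusCoord p e) g h
  map_smul' s g := funext fun e => frobeniusCoord_pow_mul p e s g
  left_inv := sum_frobeniusCoord_pow_mul_monomial p
  right_inv c := funext (frobeniusCoord_sum_pow_mul_monomial p c)

theorem faithfullyFlat_frobTwist_frobenius [Nontrivial R] :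
    Module.FaithfullyFlat (MvPowerSeries ι R) (FrobTwist (MvPowerSeries ι R) (frobenius _ p)) :=
  have : Module.Free (MvPowerSeries ι R) (FrobTwist (MvPowerSeries ι R) (frobenius _ p)) :=
    .of_equiv (frobTwistEquivPi p).symm
  have : Nontrivial (FrobTwist (MvPowerSeries ι R) (frobenius _ p)) :=
    inferInstanceAs (Nontrivial (MvPowerSeries ι R))
  inferInstance

end FrobTwist

end MvPowerSeries

theorem statement4_general (p : ℕ) (k : Type) [Field k] [ExpChar k p]
    [PerfectRing k p] (d : ℕ)
    (σ : MvPowerSeries (Fin d) k →+* MvPowerSeries (Fin d) k)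
    (hσ1 : ∀ (f : MvPowerSeries (Fin d) k) (n : (Fin d) →₀ ℕ),
      MvPowerSeries.coeff (p • n) (σ f) = (MvPowerSeries.coeff n f) ^ p)
    (hσ2 : ∀ (f : MvPowerSeries (Fin d) k) (m : (Fin d) →₀ ℕ),
      (∀ n : (Fin d) →₀ ℕ, m ≠ p • n) → MvPowerSeries.coeff m (σ f) = 0) :
    Module.FaithfullyFlat (MvPowerSeries (Fin d) k) (FrobTwist (MvPowerSeries (Fin d) k) σ) ∧
    (∀ a : Ideal (MvPowerSeries (Fin d) k),
      Ideal.map σ a = Ideal.span ((fun f => f ^ p) '' (a : Set (MvPowerSeries (Fin d) k)))) ∧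
    (∀ a b : Ideal (MvPowerSeries (Fin d) k),
      Ideal.span ((fun f => f ^ p) '' (a : Set (MvPowerSeries (Fin d) k))) ⊓
        Ideal.span ((fun f => f ^ p) '' (b : Set (MvPowerSeries (Fin d) k))) =
      Ideal.span ((fun f => f ^ p) '' ((a ⊓ b : Ideal (MvPowerSeries (Fin d) k)) :
        Set (MvPowerSeries (Fin d) k)))) := by
  obtain rfl := MvPowerSeries.ringHom_eq_frobenius p hσ1 hσ2
  exact ⟨MvPowerSeries.faithfullyFlat_frobTwist_frobenius p, fun a => rfl,
    fun a b => (MvPowerSeries.map_frobenius_inf p a b).symm⟩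

/-- Let `S̄ = k[[T₁,…,T_d]]` over a perfect field `k` of
characteristic `p` and `σ` the Frobenius endomorphism with `σ(Tᵢ) = Tᵢᵖ`.
Then `σ : S̄ → S̄` is faithfully flat, for every ideal `a ⊆ S̄` the extended
ideal `σ(a)S̄` equals `a^{(p)}` (the ideal generated by the `p`-th powers of
elements of `a`), and for ideals `a,b` one has
`a^{(p)} ∩ b^{(p)} = (a ∩ b)^{(p)}`. -/
theorem statement4 (p : ℕ) (hp : p.Prime) (k : Type) [Field k] [CharP k p] [ExpChar k p]
    [PerfectRing k p] (d : ℕ)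
    (σ : MvPowerSeries (Fin d) k →+* MvPowerSeries (Fin d) k)
    (hσ1 : ∀ (f : MvPowerSeries (Fin d) k) (n : (Fin d) →₀ ℕ),
      MvPowerSeries.coeff (p • n) (σ f) = (MvPowerSeries.coeff n f) ^ p)
    (hσ2 : ∀ (f : MvPowerSeries (Fin d) k) (m : (Fin d) →₀ ℕ),
      (∀ n : (Fin d) →₀ ℕ, m ≠ p • n) → MvPowerSeries.coeff m (σ f) = 0) :
    Module.FaithfullyFlat (MvPowerSeries (Fin d) k) (FrobTwist (MvPowerSeries (Fin d) k) σ) ∧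
    (∀ a : Ideal (MvPowerSeries (Fin d) k),
      Ideal.map σ a = Ideal.span ((fun f => f ^ p) '' (a : Set (MvPowerSeries (Fin d) k)))) ∧
    (∀ a b : Ideal (MvPowerSeries (Fin d) k),
      Ideal.span ((fun f => f ^ p) '' (a : Set (MvPowerSeries (Fin d) k))) ⊓
        Ideal.span ((fun f => f ^ p) '' (b : Set (MvPowerSeries (Fin d) k))) =
      Ideal.span ((fun f => f ^ p) '' ((a ⊓ b : Ideal (MvPowerSeries (Fin d) k)) :
        Set (MvPowerSeries (Fin d) k)))) :=
  statement4_general p k d σ hσ1 hσ2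
end

section
/- Let S be a regular local ring and M a finitely generated S-module of projective dimension at most 1 annihilated by a power of p (p a nonzerodivisor of S). Then M* := Ext¹_S(M, S) is again a finitely generated S-module of projective dimension at most 1 annihilated by the same power of p, and the natural map M → (M*)* is an isomorphism (the duality M ↦ Ext¹_S(M,S) is an involutive exact anti-equivalence on such modules). -/
/-!
Since `pⁿ` kills `M = F₀ ⧸ f(F₁)`, multiplication by `pⁿ` on `F₀` factors through `f`, giving
`h : F₀ → F₁` with `h ∘ f = pⁿ`. As `pⁿ` is a nonzerodivisor, a functional vanishing on `f(F₁)`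
vanishes on `pⁿ F₀` and hence everywhere, so `f^∨` is injective; and `ψ ∘ h` is a preimage of
`pⁿ ψ` under `f^∨`, so `pⁿ` kills `coker f^∨`. Dualizing once more returns `f` up to the
evaluation isomorphisms of the free modules, whence `(M*)* ≅ coker f ≅ M`.
-/

/-- A Noetherian local ring is regular if its maximal ideal can be generated
by `dim S` elements. -/
def IsRegularLocal (S : Type) [CommRing S] [IsLocalRing S] [IsNoetherianRing S] : Prop :=
  ∃ (n : ℕ) (s : Fin n → S), Ideal.span (Set.range s) = IsLocalRing.maximalIdeal S ∧
    ringKrullDim S = n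

open Module

section Duality

variable {R N P Q : Type*} [CommRing R] [AddCommGroup N] [Module R N]
  [AddCommGroup P] [Module R P] [AddCommGroup Q] [Module R Q]

lemma smul_mem_range_of_ker_eq_range {a : R} {f : N →ₗ[R] P} {g : P →ₗ[R] Q}
    (hfg : LinearMap.ker g = LinearMap.range f) (ha : ∀ m : Q, a • m = 0) (x : P) :
    a • x ∈ LinearMap.range f := by
  rw [← hfg, LinearMap.mem_ker, map_smul, ha]

lemma exists_comp_eq_smul_id_of_smul_mem_range {a : R} {f : N →ₗ[R] P}
    (hf : Function.Injective f) (hrange : ∀ x, a • x ∈ LinearMap.range f) :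
    ∃ h : P →ₗ[R] N, h ∘ₗ f = a • LinearMap.id := by
  let h := (LinearEquiv.ofInjective f hf).symm.toLinearMap ∘ₗ
    (a • LinearMap.id : P →ₗ[R] P).codRestrict _ hrange
  have hfh : ∀ x, f (h x) = a • x := fun x ↦
    congrArg Subtype.val ((LinearEquiv.ofInjective f hf).apply_symm_apply _)
  exact ⟨h, LinearMap.ext fun z ↦ hf <| by simp [hfh]⟩

lemma dualMap_injective_of_smul_mem_range {a : R} (ha : a ∈ nonZeroDivisors R)
    {f : N →ₗ[R] P} (hrange : ∀ x, a • x ∈ LinearMap.range f) :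
    Function.Injective f.dualMap := by
  rw [← LinearMap.ker_eq_bot, LinearMap.ker_eq_bot']
  intro φ hφ
  ext x
  obtain ⟨y, hy⟩ := hrange x
  have : φ x * a = 0 := by
    rw [mul_comm, ← smul_eq_mul, ← map_smul, ← hy]
    exact LinearMap.congr_fun hφ y
  exact ha.2 _ this

lemma smul_mem_range_dualMap_of_comp_eq_smul_id {a : R} {f : N →ₗ[R] P} {h : P →ₗ[R] N}
    (hhf : h ∘ₗ f = a • LinearMap.id) (ψ : Dual R N) :
    a • ψ ∈ LinearMap.range f.dualMap :=
  ⟨h.dualMap ψ, by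
    rw [← LinearMap.comp_apply, LinearMap.dualMap_comp_dualMap, hhf]
    ext; simp⟩

lemma Submodule.Quotient.smul_eq_zero_of_forall_smul_mem {a : R} {K : Submodule R P}
    (hK : ∀ x, a • x ∈ K) (y : P ⧸ K) : a • y = 0 := by
  induction y using Submodule.Quotient.induction_on with
  | H x => rw [← Submodule.Quotient.mk_smul, Submodule.Quotient.mk_eq_zero]; exact hK x

lemma exists_finFree_resolution_quotient_range {m₀ m₁ : ℕ} (φ : N →ₗ[R] P)
    (hφ : Function.Injective φ) (eN : (Fin m₁ → R) ≃ₗ[R] N) (eP : (Fin m₀ → R) ≃ₗ[R] P) :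
    ∃ (u : (Fin m₁ → R) →ₗ[R] (Fin m₀ → R)) (v : (Fin m₀ → R) →ₗ[R] P ⧸ LinearMap.range φ),
      Function.Injective u ∧ Function.Surjective v ∧ LinearMap.ker v = LinearMap.range u := by
  refine ⟨eP.symm.toLinearMap ∘ₗ φ ∘ₗ eN.toLinearMap, (LinearMap.range φ).mkQ ∘ₗ eP.toLinearMap,
    eP.symm.injective.comp (hφ.comp eN.injective),
    (Submodule.mkQ_surjective _).comp eP.surjective, ?_⟩
  rw [LinearMap.ker_comp, Submodule.ker_mkQ, LinearMap.range_comp, LinearMap.range_comp,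
    LinearEquiv.range, Submodule.map_top, Submodule.comap_equiv_eq_map_symm]

noncomputable def quotientRangeEquivDualDual [IsReflexive R N] [IsReflexive R P]
    (f : N →ₗ[R] P) :
    (P ⧸ LinearMap.range f) ≃ₗ[R] Dual R (Dual R P) ⧸ LinearMap.range f.dualMap.dualMap :=
  Submodule.Quotient.equiv _ _ (evalEquiv R P) <| by
    rw [← LinearMap.range_comp, evalEquiv_toLinearMap, ← Dual.eval_naturality,
      LinearMap.range_comp, ← evalEquiv_toLinearMap, LinearEquiv.range, Submodule.map_top]

end Duality

theorem statement8_general (p : ℕ) (nn : ℕ)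
    (S : Type) [CommRing S]
    (hpnzd : (p : S) ∈ nonZeroDivisors S)
    (M : Type) [AddCommGroup M] [Module S M]
    (hann : ∀ m : M, ((p : S) ^ nn) • m = 0)
    (n₀ n₁ : ℕ)
    (f : (Fin n₁ → S) →ₗ[S] (Fin n₀ → S)) (g : (Fin n₀ → S) →ₗ[S] M)
    (hf : Function.Injective f) (hg : Function.Surjective g)
    (hfg : LinearMap.ker g = LinearMap.range f) :
    Function.Injective f.dualMap ∧
    Module.Finite S (Module.Dual S (Fin n₁ → S) ⧸ LinearMap.range f.dualMap) ∧
    (∀ x : Module.Dual S (Fin n₁ → S) ⧸ LinearMap.range f.dualMap,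
      ((p : S) ^ nn) • x = 0) ∧
    -- `M*` has projective dimension at most `1`
    (∃ (m₀ m₁ : ℕ) (u : (Fin m₁ → S) →ₗ[S] (Fin m₀ → S))
        (v : (Fin m₀ → S) →ₗ[S] (Module.Dual S (Fin n₁ → S) ⧸ LinearMap.range f.dualMap)),
      Function.Injective u ∧ Function.Surjective v ∧ LinearMap.ker v = LinearMap.range u) ∧
    -- the natural map `M → (M*)*` is an isomorphism
    Nonempty (M ≃ₗ[S]
      (Module.Dual S (Module.Dual S (Fin n₀ → S)) ⧸ LinearMap.range f.dualMap.dualMap)) := by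
  have hrange := smul_mem_range_of_ker_eq_range hfg hann
  obtain ⟨h, hhf⟩ := exists_comp_eq_smul_id_of_smul_mem_range hf hrange
  have hinj : Function.Injective f.dualMap :=
    dualMap_injective_of_smul_mem_range (pow_mem hpnzd nn) hrange
  refine ⟨hinj, inferInstance,
    Submodule.Quotient.smul_eq_zero_of_forall_smul_mem
      (smul_mem_range_dualMap_of_comp_eq_smul_id hhf),
    ⟨n₁, n₀, exists_finFree_resolution_quotient_range f.dualMap hinj
      (Pi.basisFun S (Fin n₀)).toDualEquiv (Pi.basisFun S (Fin n₁)).toDualEquiv⟩, ?_⟩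
  exact ⟨(g.quotKerEquivOfSurjective hg).symm ≪≫ₗ Submodule.quotEquivOfEq _ _ hfg ≪≫ₗ
    quotientRangeEquivDualDual f⟩

/-- Let `S` be a regular local ring and `M` a finitely
generated `S`-module of projective dimension at most `1` (given by a finite
free resolution `0 → F₁ →f F₀ →g M → 0`) annihilated by a power `pⁿ` of a
nonzerodivisor prime `p`.  Then `M* := Ext¹_S(M,S)`, computed as the cokernel
of the dual map `f^∨ : F₀^∨ → F₁^∨`, is again finitely generated of projective
dimension at most `1` and annihilated by `pⁿ` (in particular `f^∨` is
injective), and the natural double dual `(M*)*`, computed as the cokernel of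
`f^∨∨`, is isomorphic to `M`. -/
theorem statement8 (p : ℕ) (hp : p.Prime) (nn : ℕ)
    (S : Type) [CommRing S] [IsLocalRing S] [IsNoetherianRing S]
    (hregular : IsRegularLocal S)
    (hpnzd : (p : S) ∈ nonZeroDivisors S)
    (M : Type) [AddCommGroup M] [Module S M] [Module.Finite S M]
    (hann : ∀ m : M, ((p : S) ^ nn) • m = 0)
    (n₀ n₁ : ℕ)
    (f : (Fin n₁ → S) →ₗ[S] (Fin n₀ → S)) (g : (Fin n₀ → S) →ₗ[S] M)
    (hf : Function.Injective f) (hg : Function.Surjective g)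
    (hfg : LinearMap.ker g = LinearMap.range f) :
    Function.Injective f.dualMap ∧
    Module.Finite S (Module.Dual S (Fin n₁ → S) ⧸ LinearMap.range f.dualMap) ∧
    (∀ x : Module.Dual S (Fin n₁ → S) ⧸ LinearMap.range f.dualMap,
      ((p : S) ^ nn) • x = 0) ∧
    -- `M*` has projective dimension at most `1`
    (∃ (m₀ m₁ : ℕ) (u : (Fin m₁ → S) →ₗ[S] (Fin m₀ → S))
        (v : (Fin m₀ → S) →ₗ[S] (Module.Dual S (Fin n₁ → S) ⧸ LinearMap.range f.dualMap)),
      Function.Injective u ∧ Function.Surjective v ∧ LinearMap.ker v = LinearMap.range u) ∧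
    -- the natural map `M → (M*)*` is an isomorphism
    Nonempty (M ≃ₗ[S]
      (Module.Dual S (Module.Dual S (Fin n₀ → S)) ⧸ LinearMap.range f.dualMap.dualMap)) :=
  statement8_general p nn S hpnzd M hann n₀ n₁ f g hf hg hfg
end
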